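/- arXiv:2304.01176 — 4 statements merged into one kernel-verified Lean document; each statement's English description precedes it below -/
import Mathlib

section
/- Let A, B ⊆ ℝ be nonempty bounded measurable sets with |co(A)| ≥ |co(B)|. Then |A + B| ≥ |A| + |B| + min{|co(A) \ A|, |B|}. -/
/-!
Approximating from inside by compact sets, we may take `A` and `B` compact with
`A ⊆ [a, a + L]` containing both endpoints and `B` inside a window `[b, b + L]`. Then `A + B`
lies in `[a + b, a + b + 2L]`; cut it into its two halves `S₁`, `S₂` and project to the circle
`ℝ ⧸ Lℤ`. Both halves project without loss of measure, the projections cover the projection of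
`A + B`, which has measure at least `min (|A| + |B|) L` by the Kneser–Macbeath inequality on the
circle, and they overlap in the common projection of `a + B ⊆ S₁` and `(a + L) + B ⊆ S₂`. Hence
`|A + B| = |S₁| + |S₂| ≥ min (|A| + |B|) |co A| + |B|`, which rearranges to the claim.

The inequality `min (μ X + μ Y) (μ G) ≤ μ (X + Y)` holds for compact sets in any compact connected
abelian group and is proved with Dyson e-transforms `(X ∪ (Y - c), Y ∩ (X + c))`, which keep the
total measure and shrink the sumset. If it failed, the overlap `c ↦ μ (Y ∩ (X + c))` would be
positive on all of the closed set `Y - X`; being continuous it is then positive everywhere, and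
choosing `c` with overlap below its average `μ X μ Y / μ G` enlarges `X` by a fixed amount.
Repeating this forever contradicts `μ X ≤ μ (X + Y)`.
-/

open MeasureTheory Pointwise Set Filter Topology
open scoped ENNReal

section DysonTransform

variable {G : Type*} [AddCommGroup G]

theorem union_neg_vadd_add_inter_vadd_subset (X Y : Set G) (c : G) :
    (X ∪ (-c +ᵥ Y)) + (Y ∩ (c +ᵥ X)) ⊆ X + Y := by
  rintro _ ⟨u, hu, _, ⟨hvY, x, hx, rfl⟩, rfl⟩
  rcases hu with hu | ⟨y, hy, rfl⟩
  · exact add_mem_add hu hvY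
  · convert add_mem_add hx hy using 1
    simp only [vadd_eq_add]
    abel

theorem preimage_prodMk_setOf_mem_sub_mem (X Y : Set G) (c : G) :
    Prod.mk c ⁻¹' {p : G × G | p.2 ∈ Y ∧ p.2 - p.1 ∈ X} = Y ∩ (c +ᵥ X) := by
  ext y
  simp [mem_vadd_set_iff_neg_vadd_mem, neg_add_eq_sub]

variable [MeasurableSpace G] {μ : Measure G}

theorem measurable_measure_inter_vadd [MeasurableAdd₂ G] [MeasurableNeg G] [SFinite μ]
    {X Y : Set G} (hX : MeasurableSet X) (hY : MeasurableSet Y) :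
    Measurable fun c : G => μ (Y ∩ (c +ᵥ X)) := by
  simp_rw [← preimage_prodMk_setOf_mem_sub_mem]
  exact measurable_measure_prodMk_left ((measurable_snd hY).inter
    ((measurable_snd.sub measurable_fst) hX))

variable [μ.IsAddLeftInvariant]

theorem measure_le_measure_add_of_nonempty {X Y : Set G} (hY : Y.Nonempty) :
    μ X ≤ μ (X + Y) := by
  obtain ⟨y, hy⟩ := hY
  calc μ X = μ (y +ᵥ X) := (measure_vadd μ y X).symm
    _ ≤ μ (X + Y) := measure_mono ((vadd_set_subset_add hy).trans (add_comm Y X).subset)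

theorem measureReal_le_of_add_subset [IsFiniteMeasure μ] {X Y S : Set G} (hYne : Y.Nonempty)
    (hXYS : X + Y ⊆ S) : μ.real X ≤ μ.real S :=
  ENNReal.toReal_mono (by finiteness)
    ((measure_le_measure_add_of_nonempty hYne).trans (measure_mono hXYS))

theorem measure_union_neg_vadd_add_measure_inter_vadd {X : Set G} (hX : MeasurableSet X)
    (Y : Set G) (c : G) :
    μ (X ∪ (-c +ᵥ Y)) + μ (Y ∩ (c +ᵥ X)) = μ X + μ Y := by
  have : μ (Y ∩ (c +ᵥ X)) = μ (X ∩ (-c +ᵥ Y)) := by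
    rw [← measure_vadd μ (-c), vadd_set_inter, neg_vadd_vadd, inter_comm]
  rw [this, measure_union_add_inter' hX, measure_vadd]

theorem measure_inter_vadd_pos_of_mem_sub {X Y : Set G} (hX : MeasurableSet X)
    (hXY : μ (X + Y) < μ X + μ Y) {c : G} (hc : c ∈ Y - X) : 0 < μ (Y ∩ (c +ᵥ X)) := by
  obtain ⟨y, hy, x, hx, rfl⟩ := hc
  -- a null overlap would make the first set of the transform as large as `μ X + μ Y`
  refine pos_iff_ne_zero.mpr fun h0 => hXY.not_ge ?_
  have hne : (Y ∩ ((y - x) +ᵥ X)).Nonempty := ⟨y, hy, x, hx, by simp [vadd_eq_add]⟩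
  calc μ X + μ Y = μ (X ∪ (-(y - x) +ᵥ Y)) := by
        rw [← measure_union_neg_vadd_add_measure_inter_vadd hX, h0, add_zero]
    _ ≤ μ ((X ∪ (-(y - x) +ᵥ Y)) + (Y ∩ ((y - x) +ᵥ X))) :=
        measure_le_measure_add_of_nonempty hne
    _ ≤ μ (X + Y) := measure_mono (union_neg_vadd_add_inter_vadd_subset X Y _)

theorem lintegral_measure_inter_vadd [MeasurableAdd₂ G] [MeasurableNeg G] [SFinite μ]
    [μ.IsNegInvariant] {X Y : Set G} (hX : MeasurableSet X) (hY : MeasurableSet Y) :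
    ∫⁻ c : G, μ (Y ∩ (c +ᵥ X)) ∂μ = μ X * μ Y := by
  have hE : MeasurableSet {p : G × G | p.2 ∈ Y ∧ p.2 - p.1 ∈ X} :=
    (measurable_snd hY).inter ((measurable_snd.sub measurable_fst) hX)
  have hsection (y : G) : μ ((fun c => (c, y)) ⁻¹' {p : G × G | p.2 ∈ Y ∧ p.2 - p.1 ∈ X}) =
      Y.indicator (fun _ => μ X) y := by
    by_cases hy : y ∈ Y
    · rw [indicator_of_mem hy, ← (Measure.measurePreserving_sub_left μ y).measure_preimage
        hX.nullMeasurableSet]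
      congr 1
      ext c
      simp [hy]
    · simp [hy]
  simp_rw [← preimage_prodMk_setOf_mem_sub_mem, ← Measure.prod_apply hE,
    Measure.prod_apply_symm hE, hsection, lintegral_indicator_const hY]

end DysonTransform

section TranslateContinuity

variable {G : Type*} [AddCommGroup G] [TopologicalSpace G] [IsTopologicalAddGroup G]
  [LocallyCompactSpace G] [MeasurableSpace G] [BorelSpace G] {μ : Measure G}
  [IsFiniteMeasureOnCompacts μ] [μ.InnerRegularCompactLTTop] [μ.IsAddLeftInvariant]

theorem isOpen_setOf_measure_inter_vadd_pos {X : Set G} (hXc : IsCompact X) (hXcl : IsClosed X)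
    (Y : Set G) : IsOpen {c : G | 0 < μ (Y ∩ (c +ᵥ X))} := by
  refine isOpen_iff_mem_nhds.mpr fun c₀ (h₀ : 0 < μ (Y ∩ (c₀ +ᵥ X))) => ?_
  have hnear : ∀ᶠ c in 𝓝 c₀, μ (((c₀ - c) +ᵥ X) \ X) < μ (Y ∩ (c₀ +ᵥ X)) :=
    ((continuous_const.sub continuous_id).tendsto' c₀ 0 (sub_self c₀)).eventually
      (eventually_nhds_zero_measure_vadd_sdiff_lt hXc hXcl h₀.ne')
  filter_upwards [hnear] with c hc
  refine pos_iff_ne_zero.mpr fun h0 => hc.not_ge ?_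
  have hshift : c +ᵥ (((c₀ - c) +ᵥ X) \ X) = (c₀ +ᵥ X) \ (c +ᵥ X) := by
    rw [vadd_set_sdiff, vadd_vadd, add_sub_cancel]
  calc μ (Y ∩ (c₀ +ᵥ X)) ≤ μ ((Y ∩ (c +ᵥ X)) ∪ ((c₀ +ᵥ X) \ (c +ᵥ X))) :=
        measure_mono fun z ⟨hzY, hz⟩ => (em (z ∈ c +ᵥ X)).imp (⟨hzY, ·⟩) (⟨hz, ·⟩)
    _ ≤ μ (Y ∩ (c +ᵥ X)) + μ ((c₀ +ᵥ X) \ (c +ᵥ X)) := measure_union_le _ _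
    _ = μ (((c₀ - c) +ᵥ X) \ X) := by rw [h0, zero_add, ← hshift, measure_vadd]

end TranslateContinuity

section CompactGroup

variable {G : Type*} [AddCommGroup G] [TopologicalSpace G] [IsTopologicalAddGroup G] [T2Space G]
  [CompactSpace G] [ConnectedSpace G] [MeasurableSpace G] [BorelSpace G] [MeasurableAdd₂ G]
  {μ : Measure G} [μ.IsAddHaarMeasure]

theorem exists_measure_inter_vadd_pos_le {X Y : Set G} (hX : IsCompact X) (hY : IsCompact Y)
    (hXne : X.Nonempty) (hYne : Y.Nonempty) (hXY : μ (X + Y) < μ X + μ Y) :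
    ∃ c : G, 0 < μ (Y ∩ (c +ᵥ X)) ∧ μ (Y ∩ (c +ᵥ X)) ≤ μ X * μ Y / μ univ := by
  have hD : {c : G | 0 < μ (Y ∩ (c +ᵥ X))} = Y - X := by
    ext c
    refine ⟨fun hc => ?_, measure_inter_vadd_pos_of_mem_sub hX.measurableSet hXY⟩
    obtain ⟨y, hy, x, hx, rfl⟩ := nonempty_of_measure_ne_zero (ne_of_gt hc)
    exact ⟨c +ᵥ x, hy, x, hx, vadd_eq_add c x ▸ add_sub_cancel_right c x⟩
  have hDuniv : {c : G | 0 < μ (Y ∩ (c +ᵥ X))} = univ := by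
    refine IsClopen.eq_univ ⟨?_, isOpen_setOf_measure_inter_vadd_pos hX hX.isClosed Y⟩ ?_ <;>
      rw [hD]
    · exact (sub_eq_add_neg Y X ▸ hY.add hX.neg).isClosed
    · exact hYne.sub hXne
  obtain ⟨c, hc⟩ := exists_le_laverage (NeZero.ne μ)
    (measurable_measure_inter_vadd (μ := μ) hX.measurableSet hY.measurableSet).aemeasurable
  rw [laverage_eq, lintegral_measure_inter_vadd hX.measurableSet hY.measurableSet] at hc
  exact ⟨c, eq_univ_iff_forall.mp hDuniv c, hc⟩

theorem exists_eTransform_measureReal_ge {X Y S : Set G} (hX : IsCompact X)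
    (hY : IsCompact Y) (hXne : X.Nonempty) (hYne : Y.Nonempty) (hXYS : X + Y ⊆ S)
    (hS : μ.real S < μ.real X + μ.real Y) (hSuniv : μ.real S < μ.real univ) :
    ∃ X' Y', IsCompact X' ∧ IsCompact Y' ∧ X'.Nonempty ∧ Y'.Nonempty ∧ X' + Y' ⊆ S ∧
      μ.real X' + μ.real Y' = μ.real X + μ.real Y ∧
      μ.real X + (μ.real X + μ.real Y - μ.real S) * (μ.real univ - μ.real S) / μ.real univ ≤
        μ.real X' := by
  have hXY : μ (X + Y) < μ X + μ Y := by
    refine (measure_mono hXYS).trans_lt ?_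
    rwa [measureReal_def, measureReal_def, measureReal_def, ← ENNReal.toReal_add (by finiteness)
      (by finiteness), ENNReal.toReal_lt_toReal (by finiteness) (by finiteness)] at hS
  obtain ⟨c, hpos, hle⟩ := exists_measure_inter_vadd_pos_le hX hY hXne hYne hXY
  have hsum : μ.real (X ∪ (-c +ᵥ Y)) + μ.real (Y ∩ (c +ᵥ X)) = μ.real X + μ.real Y := by
    simp only [measureReal_def]
    rw [← ENNReal.toReal_add (by finiteness) (by finiteness),
      measure_union_neg_vadd_add_measure_inter_vadd hX.measurableSet,
      ENNReal.toReal_add (by finiteness) (by finiteness)]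
  refine ⟨X ∪ (-c +ᵥ Y), Y ∩ (c +ᵥ X), hX.union (hY.vadd _),
    hY.inter_right (hX.isClosed.vadd c), hXne.mono subset_union_left,
    nonempty_of_measure_ne_zero (ne_of_gt hpos),
    (union_neg_vadd_add_inter_vadd_subset X Y c).trans hXYS, hsum, ?_⟩
  have hle' : μ.real (Y ∩ (c +ᵥ X)) ≤ μ.real X * μ.real Y / μ.real univ := by
    simp only [measureReal_def]
    rw [← ENNReal.toReal_mul, ← ENNReal.toReal_div]
    exact ENNReal.toReal_mono (ENNReal.div_lt_top (by finiteness)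
      (Measure.measure_univ_ne_zero.mpr (NeZero.ne μ))).ne hle
  have hXS : μ.real X ≤ μ.real S := measureReal_le_of_add_subset hYne hXYS
  have hm : 0 < μ.real univ := measureReal_univ_pos
  have hXuniv : μ.real X ≤ μ.real univ := measureReal_mono (subset_univ X)
  calc μ.real X + (μ.real X + μ.real Y - μ.real S) * (μ.real univ - μ.real S) / μ.real univ
      ≤ μ.real X + μ.real Y * (μ.real univ - μ.real X) / μ.real univ := by
        gcongr
        linarith
    _ = μ.real X + μ.real Y - μ.real X * μ.real Y / μ.real univ := by
        field_simp
        ring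
    _ ≤ μ.real (X ∪ (-c +ᵥ Y)) := by linarith

theorem min_measure_add_le_measure_add {X Y : Set G} (hX : IsCompact X) (hY : IsCompact Y)
    (hXne : X.Nonempty) (hYne : Y.Nonempty) : min (μ X + μ Y) (μ univ) ≤ μ (X + Y) := by
  by_contra! h
  obtain ⟨hσ, hm⟩ := lt_min_iff.mp h
  set S := X + Y
  have hσ' : μ.real S < μ.real X + μ.real Y := by
    simp only [measureReal_def]
    rwa [← ENNReal.toReal_add (by finiteness) (by finiteness),
      ENNReal.toReal_lt_toReal (by finiteness) (by finiteness)]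
  have hm' : μ.real S < μ.real univ :=
    (ENNReal.toReal_lt_toReal (by finiteness) (by finiteness)).mpr hm
  set η := (μ.real X + μ.real Y - μ.real S) * (μ.real univ - μ.real S) / μ.real univ
  have hη : 0 < η := div_pos (mul_pos (by linarith) (by linarith)) measureReal_univ_pos
  -- `n` transforms enlarge `X` by `n * η`, while it stays below `μ S`
  have hiter (n : ℕ) : ∃ X' Y', IsCompact X' ∧ IsCompact Y' ∧ X'.Nonempty ∧ Y'.Nonempty ∧
      X' + Y' ⊆ S ∧ μ.real X' + μ.real Y' = μ.real X + μ.real Y ∧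
      μ.real X + n * η ≤ μ.real X' := by
    induction n with
    | zero => exact ⟨X, Y, hX, hY, hXne, hYne, subset_rfl, rfl, by simp⟩
    | succ n ih =>
      obtain ⟨X', Y', hX', hY', hX'ne, hY'ne, hS', hsum, hgain⟩ := ih
      obtain ⟨X'', Y'', hX'', hY'', hX''ne, hY''ne, hS'', hsum', hgain'⟩ :=
        exists_eTransform_measureReal_ge hX' hY' hX'ne hY'ne hS' (hsum ▸ hσ') hm'
      refine ⟨X'', Y'', hX'', hY'', hX''ne, hY''ne, hS'', hsum'.trans hsum, ?_⟩
      rw [hsum] at hgain'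
      push_cast
      linarith
  obtain ⟨n, hn⟩ := exists_nat_gt ((μ.real S - μ.real X) / η)
  obtain ⟨X', Y', -, -, -, hY'ne, hS', -, hgain⟩ := hiter n
  have hX'S : μ.real X' ≤ μ.real S := measureReal_le_of_add_subset hY'ne hS'
  rw [div_lt_iff₀ hη] at hn
  linarith

end CompactGroup

section AddCircle

variable {L : ℝ}

theorem AddCircle.measurableSet_coe_image {E : Set ℝ} (hE : MeasurableSet E) :
    MeasurableSet (((↑) : ℝ → AddCircle L) '' E) := by
  change MeasurableSet ((QuotientAddGroup.mk : ℝ → AddCircle L) ⁻¹' _)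
  rw [QuotientAddGroup.preimage_image_mk]
  exact .iUnion fun _ => measurable_add_const _ hE

variable [Fact (0 < L)]

theorem AddCircle.volume_coe_image_of_subset_Ioc {t : ℝ} {E : Set ℝ} (hE : MeasurableSet E)
    (hEt : E ⊆ Ioc t (t + L)) : volume (((↑) : ℝ → AddCircle L) '' E) = volume E := by
  have hm := measurableSet_coe_image (L := L) hE
  rw [← (AddCircle.measurePreserving_mk L t).measure_preimage hm.nullMeasurableSet,
    Measure.restrict_apply (AddCircle.measurable_mk' hm)]
  congr 1
  ext x
  refine ⟨fun ⟨⟨e, he, hex⟩, hx⟩ => ?_, fun hx => ⟨⟨x, hx, rfl⟩, hEt hx⟩⟩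
  rwa [← (AddCircle.coe_eq_coe_iff_of_mem_Ioc (hEt he) hx).mp hex]

theorem AddCircle.volume_coe_image_of_subset_Icc {t : ℝ} {E : Set ℝ} (hE : MeasurableSet E)
    (hEt : E ⊆ Icc t (t + L)) : volume (((↑) : ℝ → AddCircle L) '' E) = volume E := by
  have hEIoc : MeasurableSet (E ∩ Ioc t (t + L)) := hE.inter measurableSet_Ioc
  have hvol : volume (E ∩ Ioc t (t + L)) = volume E :=
    measure_congr (((ae_eq_refl E).inter Ioc_ae_eq_Icc).trans (inter_eq_left.mpr hEt).eventuallyEq)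
  refine le_antisymm ?_ ?_
  · -- the endpoint `t` of `E` is identified with `t + L`
    have hsub : ((↑) : ℝ → AddCircle L) '' E ⊆
        ((↑) : ℝ → AddCircle L) '' insert (t + L) (E ∩ Ioc t (t + L)) := by
      rintro _ ⟨e, he, rfl⟩
      rcases (hEt he).1.eq_or_lt with rfl | hlt
      · exact ⟨t + L, mem_insert _ _, AddCircle.coe_add_period L t⟩
      · exact ⟨e, mem_insert_of_mem _ ⟨he, hlt, (hEt he).2⟩, rfl⟩
    calc volume (((↑) : ℝ → AddCircle L) '' E)
        ≤ volume (((↑) : ℝ → AddCircle L) '' insert (t + L) (E ∩ Ioc t (t + L))) :=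
          measure_mono hsub
      _ = volume E := by
        rw [volume_coe_image_of_subset_Ioc (hEIoc.insert _)
          (insert_subset ⟨lt_add_of_pos_right t Fact.out, le_rfl⟩ inter_subset_right),
          measure_congr (insert_ae_eq_self _ _), hvol]
  · calc volume E = volume (((↑) : ℝ → AddCircle L) '' (E ∩ Ioc t (t + L))) := by
          rw [volume_coe_image_of_subset_Ioc hEIoc inter_subset_right, hvol]
      _ ≤ volume (((↑) : ℝ → AddCircle L) '' E) := measure_mono (image_mono inter_subset_left)

-- inclusion–exclusion for the two halves of `S`, each mapping to the circle without loss
theorem AddCircle.volume_coe_image_add_volume_inter_eq {S : Set ℝ} {c : ℝ} (hS : MeasurableSet S)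
    (hSc : S ⊆ Icc c (c + L + L)) :
    volume (((↑) : ℝ → AddCircle L) '' S) +
      volume (((↑) : ℝ → AddCircle L) '' (S ∩ Icc c (c + L)) ∩
        ((↑) : ℝ → AddCircle L) '' (S ∩ Icc (c + L) (c + L + L))) = volume S := by
  have hL : (0 : ℝ) < L := Fact.out
  set S₁ := S ∩ Icc c (c + L)
  set S₂ := S ∩ Icc (c + L) (c + L + L)
  have hS₁ : MeasurableSet S₁ := hS.inter measurableSet_Icc
  have hS₁₂ : S₁ ∪ S₂ = S := by
    rw [← inter_union_distrib_left, Icc_union_Icc_eq_Icc (by linarith) (by linarith),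
      inter_eq_left.mpr hSc]
  have hnull : volume (S₁ ∩ S₂) = 0 :=
    measure_mono_null (fun _ ⟨⟨_, _, h₁⟩, _, h₂, _⟩ => le_antisymm h₁ h₂) Real.volume_singleton
  calc volume (((↑) : ℝ → AddCircle L) '' S) +
        volume (((↑) : ℝ → AddCircle L) '' S₁ ∩ ((↑) : ℝ → AddCircle L) '' S₂)
      = volume (((↑) : ℝ → AddCircle L) '' S₁) + volume (((↑) : ℝ → AddCircle L) '' S₂) := by
        rw [← measure_union_add_inter' (measurableSet_coe_image hS₁), ← image_union, hS₁₂]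
    _ = volume S₁ + volume S₂ := by
        rw [volume_coe_image_of_subset_Icc hS₁ inter_subset_right,
          volume_coe_image_of_subset_Icc (t := c + L) (hS.inter measurableSet_Icc)
            inter_subset_right]
    _ = volume S := by rw [← measure_union_add_inter' hS₁, hS₁₂, hnull, add_zero]

end AddCircle

theorem min_volume_add_add_volume_le_volume_add_of_subset_Icc {K₁ K₂ : Set ℝ} {a b L : ℝ}
    (hL : 0 < L) (hK₁ : IsCompact K₁) (hK₂ : IsCompact K₂) (ha : a ∈ K₁) (haL : a + L ∈ K₁)
    (hK₁a : K₁ ⊆ Icc a (a + L)) (hK₂ne : K₂.Nonempty) (hK₂b : K₂ ⊆ Icc b (b + L)) :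
    min (volume K₁ + volume K₂) (ENNReal.ofReal L) + volume K₂ ≤ volume (K₁ + K₂) := by
  have : Fact (0 < L) := ⟨hL⟩
  set π : ℝ → AddCircle L := (↑)
  have hπ : Continuous π := AddCircle.continuous_mk' L
  have hsum : K₁ + K₂ ⊆ Icc (a + b) (a + b + L + L) := by
    rintro _ ⟨x, hx, y, hy, rfl⟩
    obtain ⟨⟨hx₁, hx₂⟩, ⟨hy₁, hy₂⟩⟩ := And.intro (hK₁a hx) (hK₂b hy)
    constructor <;> linarith
  have hfold := AddCircle.volume_coe_image_add_volume_inter_eq (hK₁.add hK₂).measurableSet hsum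
  set S₁ := (K₁ + K₂) ∩ Icc (a + b) (a + b + L)
  set S₂ := (K₁ + K₂) ∩ Icc (a + b + L) (a + b + L + L)
  -- `a + w ∈ S₁` and `(a + L) + w ∈ S₂` have the same image in the circle
  have hoverlap : π '' (a +ᵥ K₂) ⊆ π '' S₁ ∩ π '' S₂ := by
    rintro _ ⟨_, ⟨w, hw, rfl⟩, rfl⟩
    obtain ⟨hw₁, hw₂⟩ := hK₂b hw
    refine ⟨⟨a + w, ⟨add_mem_add ha hw, by linarith, by linarith⟩, rfl⟩,
      ⟨a + L + w, ⟨add_mem_add haL hw, by linarith, by linarith⟩, ?_⟩⟩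
    simp only [π, vadd_eq_add, add_right_comm a L w, AddCircle.coe_add_period]
  have hK₂vol : volume K₂ ≤ volume (π '' S₁ ∩ π '' S₂) := by
    calc volume K₂ = volume (π '' (a +ᵥ K₂)) := by
          rw [AddCircle.volume_coe_image_of_subset_Icc (t := a + b) (hK₂.vadd a).measurableSet,
            measure_vadd]
          rintro _ ⟨w, hw, rfl⟩
          obtain ⟨hw₁, hw₂⟩ := hK₂b hw
          constructor <;> simp only [vadd_eq_add] <;> linarith
      _ ≤ volume (π '' S₁ ∩ π '' S₂) := measure_mono hoverlap
  have hcircle := min_measure_add_le_measure_add (μ := volume) (hK₁.image hπ) (hK₂.image hπ)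
    (Set.Nonempty.image π ⟨a, ha⟩) (hK₂ne.image π)
  have hπadd : π '' (K₁ + K₂) = π '' K₁ + π '' K₂ :=
    image_add (QuotientAddGroup.mk' (AddSubgroup.zmultiples L))
  rw [AddCircle.measure_univ, AddCircle.volume_coe_image_of_subset_Icc hK₁.measurableSet hK₁a,
    AddCircle.volume_coe_image_of_subset_Icc hK₂.measurableSet hK₂b, ← hπadd] at hcircle
  exact (add_le_add hcircle hK₂vol).trans_eq hfold

theorem MeasurableSet.exists_isCompact_superset_finite_le_add {α : Type*} [MeasurableSpace α]
    [TopologicalSpace α] {μ : Measure α} [μ.InnerRegularCompactLTTop] {E F : Set α}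
    (hE : MeasurableSet E) (hμE : μ E ≠ ∞) (hF : F.Finite) (hFE : F ⊆ E) {ε : ℝ≥0∞}
    (hε : ε ≠ 0) : ∃ K, F ⊆ K ∧ K ⊆ E ∧ IsCompact K ∧ μ E ≤ μ K + ε := by
  obtain ⟨K, hKE, hK, hlt⟩ := hE.exists_isCompact_lt_add hμE hε
  exact ⟨F ∪ K, subset_union_left, union_subset hFE hKE, hF.isCompact.union hK,
    hlt.le.trans (by gcongr; exact subset_union_right)⟩

section Approximation

open Metric

theorem Real.volume_convexHull {A : Set ℝ} (hA : Bornology.IsBounded A) (hAne : A.Nonempty) :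
    volume (convexHull ℝ A) = ENNReal.ofReal (diam A) := by
  rw [Real.diam_eq hA]
  refine le_antisymm ?_ ?_
  · calc volume (convexHull ℝ A) ≤ volume (Icc (sInf A) (sSup A)) :=
          measure_mono (convexHull_min (subset_Icc_csInf_csSup hA.bddBelow hA.bddAbove)
            (convex_Icc _ _))
      _ = ENNReal.ofReal (sSup A - sInf A) := Real.volume_Icc
  · rw [← Real.volume_Ioo]
    refine measure_mono fun x ⟨h₁, h₂⟩ => ?_
    obtain ⟨a, ha, hax⟩ := exists_lt_of_csInf_lt hAne h₁
    obtain ⟨b, hb, hxb⟩ := exists_lt_of_lt_csSup hAne h₂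
    exact (convex_convexHull ℝ A).ordConnected.out (subset_convexHull ℝ A ha)
      (subset_convexHull ℝ A hb) ⟨hax.le, hxb.le⟩

theorem IsCompact.subset_Icc_sInf_add_diam {K : Set ℝ} (hK : IsCompact K) :
    K ⊆ Icc (sInf K) (sInf K + diam K) := by
  rw [Real.diam_eq hK.isBounded, add_sub_cancel]
  exact subset_Icc_csInf_csSup hK.bddBelow hK.bddAbove

theorem IsCompact.sInf_add_diam_mem {K : Set ℝ} (hK : IsCompact K) (hne : K.Nonempty) :
    sInf K + diam K ∈ K := by
  rw [Real.diam_eq hK.isBounded, add_sub_cancel]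
  exact hK.sSup_mem hne

theorem MeasurableSet.exists_isCompact_subset_volume_le_add_diam_le_add {A : Set ℝ}
    (hA : MeasurableSet A) (hAbd : Bornology.IsBounded A) (hAne : A.Nonempty) {δ : ℝ}
    (hδ : 0 < δ) : ∃ K ⊆ A, IsCompact K ∧ K.Nonempty ∧ volume A ≤ volume K + ENNReal.ofReal δ ∧
      diam A ≤ diam K + 2 * δ := by
  obtain ⟨a₁, ha₁, ha₁lt⟩ := exists_lt_of_csInf_lt hAne (lt_add_of_pos_right (sInf A) hδ)
  obtain ⟨a₂, ha₂, ha₂gt⟩ := exists_lt_of_lt_csSup hAne (sub_lt_self (sSup A) hδ)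
  obtain ⟨K, hFK, hKA, hK, hvol⟩ := hA.exists_isCompact_superset_finite_le_add
    (hAbd.measure_lt_top (μ := volume)).ne (toFinite {a₁, a₂})
    (insert_subset ha₁ (singleton_subset_iff.mpr ha₂))
    (ENNReal.ofReal_pos.mpr hδ).ne'
  have h₁ : sInf K ≤ a₁ := csInf_le hK.bddBelow (hFK (mem_insert _ _))
  have h₂ : a₂ ≤ sSup K := le_csSup hK.bddAbove (hFK (mem_insert_of_mem _ rfl))
  refine ⟨K, hKA, hK, ⟨a₁, hFK (mem_insert _ _)⟩, hvol, ?_⟩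
  rw [Real.diam_eq hAbd, Real.diam_eq hK.isBounded]
  linarith

theorem MeasurableSet.exists_isCompact_subset_Icc_volume_le_add {B : Set ℝ}
    (hB : MeasurableSet B) (hBbd : Bornology.IsBounded B) (hBne : B.Nonempty) {L δ : ℝ}
    (hL : 0 < L) (hδ : 0 < δ) :
    ∃ K ⊆ B, IsCompact K ∧ K.Nonempty ∧ K ⊆ Icc (sInf B) (sInf B + L) ∧
      volume B ≤ volume K + ENNReal.ofReal δ + ENNReal.ofReal (diam B - L) := by
  set c := sInf B
  obtain ⟨b₀, hb₀, hb₀lt⟩ := exists_lt_of_csInf_lt hBne (lt_add_of_pos_right c hL)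
  have hb₀' : b₀ ∈ B ∩ Icc c (c + L) := ⟨hb₀, csInf_le hBbd.bddBelow hb₀, hb₀lt.le⟩
  obtain ⟨K, hFK, hKB, hK, hvol⟩ :=
    (hB.inter measurableSet_Icc).exists_isCompact_superset_finite_le_add
    ((hBbd.subset inter_subset_left).measure_lt_top (μ := volume)).ne (finite_singleton b₀)
    (singleton_subset_iff.mpr hb₀') (ENNReal.ofReal_pos.mpr hδ).ne'
  refine ⟨K, fun x hx => (hKB hx).1, hK, ⟨b₀, hFK rfl⟩, fun x hx => (hKB hx).2, ?_⟩
  have hcover : B ⊆ (B ∩ Icc c (c + L)) ∪ Ioc (c + L) (sSup B) := fun x hx =>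
    (le_or_gt x (c + L)).imp (fun h => ⟨hx, csInf_le hBbd.bddBelow hx, h⟩)
      (fun h => ⟨h, le_csSup hBbd.bddAbove hx⟩)
  calc volume B ≤ volume (B ∩ Icc c (c + L)) + volume (Ioc (c + L) (sSup B)) :=
        (measure_mono hcover).trans (measure_union_le _ _)
    _ ≤ volume K + ENNReal.ofReal δ + ENNReal.ofReal (diam B - L) := by
        rw [Real.volume_Ioc, Real.diam_eq hBbd, sub_sub]
        gcongr

theorem min_volume_add_add_volume_le_volume_add_add_ofReal {A B : Set ℝ} (hA : MeasurableSet A)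
    (hB : MeasurableSet B) (hAbd : Bornology.IsBounded A) (hBbd : Bornology.IsBounded B)
    (hAne : A.Nonempty) (hBne : B.Nonempty) (hdiam : diam B ≤ diam A) {δ : ℝ} (hδ : 0 < δ)
    (hδA : 2 * δ < diam A) :
    min (volume A + volume B) (ENNReal.ofReal (diam A)) + volume B ≤
      volume (A + B) + 7 * ENNReal.ofReal δ := by
  obtain ⟨K₁, hK₁A, hK₁, hK₁ne, hvolA, hdiamA⟩ :=
    hA.exists_isCompact_subset_volume_le_add_diam_le_add hAbd hAne hδ
  have hL : 0 < diam K₁ := by linarith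
  obtain ⟨K₂, hK₂B, hK₂, hK₂ne, hK₂Icc, hvolB⟩ :=
    hB.exists_isCompact_subset_Icc_volume_le_add hBbd hBne hL hδ
  have hcore := min_volume_add_add_volume_le_volume_add_of_subset_Icc hL hK₁ hK₂
    (hK₁.sInf_mem hK₁ne) (hK₁.sInf_add_diam_mem hK₁ne) hK₁.subset_Icc_sInf_add_diam hK₂ne hK₂Icc
  set η := ENNReal.ofReal δ
  have h2η : ENNReal.ofReal (2 * δ) = 2 * η := by
    rw [ENNReal.ofReal_mul zero_le_two, ENNReal.ofReal_ofNat]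
  have hvolB' : volume B ≤ volume K₂ + 3 * η := by
    calc volume B ≤ volume K₂ + η + ENNReal.ofReal (2 * δ) :=
          hvolB.trans (by gcongr; linarith)
      _ = volume K₂ + 3 * η := by rw [h2η]; ring
  have hdiamA' : ENNReal.ofReal (diam A) ≤ ENNReal.ofReal (diam K₁) + 4 * η := by
    calc ENNReal.ofReal (diam A) ≤ ENNReal.ofReal (diam K₁) + ENNReal.ofReal (2 * δ) := by
          rw [← ENNReal.ofReal_add diam_nonneg (by positivity)]
          exact ENNReal.ofReal_le_ofReal hdiamA
      _ ≤ ENNReal.ofReal (diam K₁) + 4 * η := by rw [h2η]; gcongr; norm_num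
  calc min (volume A + volume B) (ENNReal.ofReal (diam A)) + volume B
      ≤ min (volume K₁ + volume K₂ + 4 * η) (ENNReal.ofReal (diam K₁) + 4 * η) +
          (volume K₂ + 3 * η) := by
        refine add_le_add (min_le_min ?_ hdiamA') hvolB'
        calc volume A + volume B ≤ volume K₁ + η + (volume K₂ + 3 * η) := add_le_add hvolA hvolB'
          _ = volume K₁ + volume K₂ + 4 * η := by ring
    _ = min (volume K₁ + volume K₂) (ENNReal.ofReal (diam K₁)) + volume K₂ + 7 * η := by
        rw [min_add_add_right]
        ring
    _ ≤ volume (A + B) + 7 * η := by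
        gcongr
        exact hcore.trans (measure_mono (add_subset_add hK₁A hK₂B))

theorem min_volume_add_volume_convexHull_add_volume_le_volume_add {A B : Set ℝ}
    (hA : MeasurableSet A) (hB : MeasurableSet B) (hAbd : Bornology.IsBounded A)
    (hBbd : Bornology.IsBounded B) (hAne : A.Nonempty) (hBne : B.Nonempty)
    (hco : volume (convexHull ℝ B) ≤ volume (convexHull ℝ A)) :
    min (volume A + volume B) (volume (convexHull ℝ A)) + volume B ≤ volume (A + B) := by
  rw [Real.volume_convexHull hAbd hAne, Real.volume_convexHull hBbd hBne] at hco
  rw [Real.volume_convexHull hAbd hAne]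
  have hdiamA : 0 ≤ diam A := diam_nonneg
  have hdiam : diam B ≤ diam A := (ENNReal.ofReal_le_ofReal_iff hdiamA).mp hco
  rcases hdiamA.eq_or_lt with h0 | hpos
  · rw [← h0, ENNReal.ofReal_zero, min_eq_right zero_le, zero_add, add_comm A B]
    exact measure_le_measure_add_of_nonempty hAne
  refine ENNReal.le_of_forall_pos_le_add fun ε hε _ => ?_
  set δ := min ((ε : ℝ) / 7) (diam A / 4)
  have hδ : 0 < δ := lt_min (by positivity) (by positivity)
  have hδε : 7 * δ ≤ ε := by linarith [min_le_left ((ε : ℝ) / 7) (diam A / 4)]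
  have hδA : 2 * δ < diam A := by linarith [min_le_right ((ε : ℝ) / 7) (diam A / 4)]
  refine (min_volume_add_add_volume_le_volume_add_add_ofReal hA hB hAbd hBbd hAne hBne hdiam
    hδ hδA).trans (add_le_add_right ?_ _)
  calc 7 * ENNReal.ofReal δ = ENNReal.ofReal (7 * δ) := by
        rw [ENNReal.ofReal_mul (by norm_num), ENNReal.ofReal_ofNat]
    _ ≤ ε := ENNReal.ofReal_le_of_le_toReal (by simpa using hδε)

end Approximation

/-- **Strengthened continuous Freiman-type inequality for distinct sets in one
dimension.** For nonempty bounded measurable `A, B ⊆ ℝ` with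
`|co(A)| ≥ |co(B)|`, one has
`|A + B| ≥ |A| + |B| + min{|co(A) \ A|, |B|}`. -/
theorem one_dim_distinct_sets (A B : Set ℝ)
    (hAne : A.Nonempty) (hBne : B.Nonempty)
    (hAbd : Bornology.IsBounded A) (hBbd : Bornology.IsBounded B)
    (hA : MeasurableSet A) (hB : MeasurableSet B)
    (hco : volume (convexHull ℝ B) ≤ volume (convexHull ℝ A)) :
    volume A + volume B + min (volume (convexHull ℝ A \ A)) (volume B) ≤
      volume (A + B) := by
  have hsplit : volume (convexHull ℝ A) = volume A + volume (convexHull ℝ A \ A) := by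
    rw [measure_add_sdiff hA.nullMeasurableSet,
      union_eq_self_of_subset_left (subset_convexHull ℝ A)]
  calc volume A + volume B + min (volume (convexHull ℝ A \ A)) (volume B)
      = min (volume A + volume B) (volume (convexHull ℝ A)) + volume B := by
        rw [hsplit, ← min_add_add_left, ← min_add_add_right, min_comm]
        congr 1
        ring
    _ ≤ volume (A + B) :=
        min_volume_add_volume_convexHull_add_volume_le_volume_add hA hB hAbd hBbd hAne hBne hco
end

section
/- Let X, Y ⊆ ℝ^d be nonempty compact convex sets. Then there exist a vector v ∈ ℝ^d and an invertible affine transformation T : ℝ^d → ℝ^d such that, setting U := T(X) and V := v + T(Y), there are points p^1, …, p^d ∈ U ∪ V, scalars λ_1, …, λ_d ≥ 0, and affine hyperplanes H_1, …, H_d ⊆ ℝ^d satisfying: (1) for each i, if p^i ∈ U then p^i + λ_i e_i ∈ U, and if p^i ∈ V then p^i + λ_i e_i ∈ V; (2) for each i, U ∪ V ⊆ H_i + [0, λ_i]·e_i; (3) |⋂_{i=1}^d (H_i + [0, λ_i]·e_i)| = ∏_{i=1}^d λ_i. -/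
/-!
Take a basis `b` maximising `|det|` among `d`-tuples of vectors drawn from the compact set
`K = (X - X) ∪ (Y - Y)`, enlarged by a basis of a complement of `span K` so that it spans.
Replacing `b i` by `z` multiplies the determinant by the `i`-th coordinate of `z`, so every
difference of two points of `X` or of `Y` has coordinates of modulus at most `1`; a counting
argument shows that the coordinates with `b i ∉ K` vanish on `K`. With `λᵢ = 1` or `0`
accordingly, `λᵢ • b i` is a chord of `X` or `Y`, and each coordinate projection of `X` and of
`Y` has width at most `λᵢ`. Translating `Y` so that the coordinate projections of both sets
have the same midpoints puts `X ∪ (τ + Y)` in a box with sides `λᵢ`, and flipping the sign of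
`b i` where needed turns each chord into one that starts at a point of `X ∪ (τ + Y)` and stays
in whichever of the two sets contains that point.
-/

open MeasureTheory Pointwise Module Set Submodule

theorem IsCompact.sub {G : Type*} [TopologicalSpace G] [Sub G] [ContinuousSub G] {s t : Set G}
    (hs : IsCompact s) (ht : IsCompact t) : IsCompact (s - t) :=
  sub_image_prod (s := s) (t := t) ▸ (hs.prod ht).image continuous_sub

theorem exists_abs_sub_le_half {S : Set ℝ} (hS : S.Nonempty) {l : ℝ}
    (h : ∀ a ∈ S, ∀ b ∈ S, a - b ≤ l) : ∃ m, ∀ a ∈ S, |a - m| ≤ l / 2 := by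
  obtain ⟨a₀, ha₀⟩ := hS
  have hbddA : BddAbove S := ⟨l + a₀, fun a ha => by linarith [h a ha a₀ ha₀]⟩
  have hbddB : BddBelow S := ⟨a₀ - l, fun a ha => by linarith [h a₀ ha₀ a ha]⟩
  have hwidth : sSup S ≤ sInf S + l :=
    csSup_le ⟨a₀, ha₀⟩ fun a ha => by
      linarith [le_csInf ⟨a₀, ha₀⟩ fun b hb => (by linarith [h a ha b hb] : a - l ≤ b)]
  refine ⟨(sSup S + sInf S) / 2, fun a ha => abs_le.2 ⟨?_, ?_⟩⟩ <;>
    linarith [le_csSup hbddA ha, csInf_le hbddB ha]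

theorem exists_sign_chord_of_mem_union_sub {R M : Type*} [Ring R] [AddCommGroup M] [Module R M]
    {X Z : Set M} {v : M} (hv : v ∈ (X - X) ∪ (Z - Z)) :
    ∃ σ : Rˣ, (σ = 1 ∨ σ = -1) ∧
      ∃ p ∈ X ∪ Z, (p ∈ X → p + σ • v ∈ X) ∧ (p ∈ Z → p + σ • v ∈ Z) := by
  wlog hX : v ∈ X - X generalizing X Z
  · obtain ⟨σ, hσ, p, hp, hpZ, hpX⟩ := this (union_comm (X - X) _ ▸ hv) (hv.resolve_left hX)
    exact ⟨σ, hσ, p, union_comm Z X ▸ hp, hpX, hpZ⟩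
  obtain ⟨a, ha, b, hb, rfl⟩ := hX
  by_cases hab : b ∈ Z → a ∈ Z
  · exact ⟨1, .inl rfl, b, .inl hb, fun _ => by simpa, fun h => by simpa using hab h⟩
  · push Not at hab
    exact ⟨-1, .inr rfl, a, .inl ha, fun _ => by simpa, fun h => absurd h hab.2⟩

namespace Module.Basis

section DivisionRing

variable {ι K V : Type*} [DivisionRing K] [AddCommGroup V] [Module K V]

theorem exists_basis_forall_mem (e : Basis ι K V) {D : Set V} (hD : span K D = ⊤) :
    ∃ b : Basis ι K V, ∀ i, b i ∈ D := by
  obtain ⟨s, hsD, hs, hli⟩ := exists_linearIndependent K D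
  let bs := Basis.mk hli (by simp [hs, hD])
  exact ⟨bs.reindex (bs.indexEquiv e), fun i => by simpa [bs] using hsD (Subtype.coe_prop _)⟩

theorem repr_eq_zero_of_finrank_span_le [Fintype ι] (b : Basis ι K V) {s : Set V}
    (h : finrank K (span K s) ≤ Nat.card {j // b j ∈ s}) {i : ι} (hi : b i ∉ s) {z : V}
    (hz : z ∈ span K s) : b.repr z i = 0 := by
  classical
  have := Module.Finite.of_basis b
  have hle : span K (range (b ∘ Subtype.val : {j // b j ∈ s} → V)) ≤ span K s :=
    span_le.2 <| range_subset_iff.2 fun j => subset_span j.2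
  have heq := eq_of_le_of_finrank_le hle <| by
    rwa [finrank_span_eq_card (b.linearIndependent.comp _ Subtype.val_injective),
      ← Nat.card_eq_fintype_card]
  rw [← heq] at hz
  refine span_induction (p := fun z _ => b.repr z i = 0) ?_ (by simp)
    (fun _ _ _ _ h₁ h₂ => by simp [h₁, h₂]) (fun _ _ _ h => by simp [h]) hz
  rintro _ ⟨j, rfl⟩
  simp [show j.1 ≠ i from fun h => hi (h ▸ j.2)]

end DivisionRing

variable {ι E : Type*}

section Determinant

variable [Fintype ι] [DecidableEq ι]

theorem det_update_eq_mul_repr {K : Type*} [Field K] [AddCommGroup E] [Module K E]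
    (e b : Basis ι K E) (i : ι) (z : E) :
    e.det (Function.update b i z) = e.det b * b.repr z i := by
  have hb : Basis.mk b.linearIndependent b.span_eq.ge = b :=
    Basis.eq_of_apply_eq fun _ => by simp
  simpa [hb] using congr($(e.det_smul_mk_coord_eq_det_update b.linearIndependent
    b.span_eq.ge i) z).symm

theorem abs_repr_le_one_of_abs_det_update_le {K : Type*} [Field K] [LinearOrder K]
    [IsStrictOrderedRing K] [AddCommGroup E] [Module K E] (e b : Basis ι K E) {i : ι} {z : E}
    (h : |e.det (Function.update b i z)| ≤ |e.det b|) : |b.repr z i| ≤ 1 := by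
  have hpos : 0 < |e.det b| := abs_pos.2 (e.isUnit_det b).ne_zero
  rw [det_update_eq_mul_repr, abs_mul] at h
  exact le_of_mul_le_mul_left (by simpa using h) hpos

section Normed

variable [NormedAddCommGroup E] [NormedSpace ℝ E] [FiniteDimensional ℝ E]

theorem continuous_det (e : Basis ι ℝ E) : Continuous fun v : ι → E => e.det v := by
  have := e.equivFun.toLinearMap.continuous_of_finiteDimensional
  exact Continuous.matrix_det (continuous_pi fun i => continuous_pi fun j =>
    (continuous_apply i).comp (this.comp (continuous_apply j)))

theorem exists_basis_forall_mem_isMaxOn_abs_det (e : Basis ι ℝ E) {D : Set E}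
    (hDc : IsCompact D) (hD : span ℝ D = ⊤) :
    ∃ b : Basis ι ℝ E, (∀ i, b i ∈ D) ∧
      ∀ v : ι → E, (∀ i, v i ∈ D) → |e.det v| ≤ |e.det b| := by
  obtain ⟨b₀, hb₀⟩ := e.exists_basis_forall_mem hD
  obtain ⟨v, hv, hmax⟩ := (isCompact_univ_pi fun _ : ι => hDc).exists_isMaxOn
    ⟨b₀, fun i _ => hb₀ i⟩ e.continuous_det.abs.continuousOn
  have hvdet : IsUnit (e.det v) := by
    refine isUnit_iff_ne_zero.2 fun h => ?_
    have := hmax (show ⇑b₀ ∈ univ.pi fun _ => D from fun i _ => hb₀ i)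
    simp [h, (e.isUnit_det b₀).ne_zero] at this
  obtain ⟨hli, hsp⟩ := e.is_basis_iff_det.2 hvdet
  refine ⟨Basis.mk hli hsp.ge, fun i => by simpa using hv i trivial, fun w hw => ?_⟩
  simpa using hmax (fun i _ => hw i)

theorem exists_basis_smul_mem_abs_repr_le (e : Basis ι ℝ E) {K : Set E} (hK : IsCompact K)
    (h0 : (0 : E) ∈ K) :
    ∃ (b : Basis ι ℝ E) (lam : ι → ℝ), (∀ i, 0 ≤ lam i) ∧ (∀ i, lam i • b i ∈ K) ∧
      ∀ z ∈ K, ∀ i, |b.repr z i| ≤ lam i := by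
  classical
  obtain ⟨W, hW⟩ := (span ℝ K).exists_isCompl
  let w := Module.finBasis ℝ W
  have hwW : span ℝ (range (W.subtype ∘ w)) = W := by
    rw [range_comp, ← map_span, w.span_eq, Submodule.map_top, range_subtype]
  obtain ⟨b, hbD, hmax⟩ := e.exists_basis_forall_mem_isMaxOn_abs_det
    (hK.union (finite_range (W.subtype ∘ w)).isCompact)
    (by rw [span_union, hwW, hW.sup_eq_top])
  have hcoord : ∀ z ∈ K, ∀ i, |b.repr z i| ≤ 1 := fun z hz i =>
    e.abs_repr_le_one_of_abs_det_update_le b <| hmax _ fun j => by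
      rcases eq_or_ne j i with rfl | hj
      · simp [hz]
      · simpa [hj] using hbD j
  -- The `b j ∉ K` are independent vectors of `W`, so there are at most `dim W` of them.
  have hcard : finrank ℝ (span ℝ K) ≤ Nat.card {j // b j ∈ K} := by
    have hW' : finrank ℝ (span ℝ (range (b ∘ Subtype.val : {j // b j ∉ K} → E))) ≤
        finrank ℝ W :=
      Submodule.finrank_mono <| span_le.2 <| range_subset_iff.2 fun j => by
        obtain ⟨k, hk⟩ := (hbD j).resolve_left j.2
        simp [← hk]
    rw [finrank_span_eq_card (b.linearIndependent.comp _ Subtype.val_injective)] at hW'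
    have := finrank_add_eq_of_isCompl hW
    rw [finrank_eq_card_basis e] at this
    have := Fintype.card_subtype_compl (fun j => b j ∈ K)
    simp only [Nat.card_eq_fintype_card]
    omega
  refine ⟨b, fun i => if b i ∈ K then 1 else 0, fun i => by by_cases h : b i ∈ K <;> simp [h],
    fun i => by by_cases h : b i ∈ K <;> simp [h, h0], fun z hz i => ?_⟩
  by_cases h : b i ∈ K
  · simpa [h] using hcoord z hz i
  · simp [h, b.repr_eq_zero_of_finrank_span_le hcard h (subset_span hz)]

end Normed

end Determinant

variable [AddCommGroup E] [Module ℝ E]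

theorem exists_abs_repr_sub_le_half (b : Basis ι ℝ E) {X : Set E} (hX : X.Nonempty)
    {lam : ι → ℝ} (h : ∀ z ∈ X - X, ∀ i, |b.repr z i| ≤ lam i) :
    ∃ m : ι → ℝ, ∀ x ∈ X, ∀ i, |b.repr x i - m i| ≤ lam i / 2 := by
  choose m hm using fun i =>
    exists_abs_sub_le_half (hX.image fun x => b.repr x i) (l := lam i) <| by
      rintro _ ⟨x, hx, rfl⟩ _ ⟨y, hy, rfl⟩
      simpa using (abs_le.1 (h (x - y) (sub_mem_sub hx hy) i)).2
  exact ⟨m, fun x hx i => hm i _ ⟨x, hx, rfl⟩⟩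

/-- The bounds are centred at `m` rather than anchored at an endpoint because centring
survives replacing `b i` by `-b i`. -/
theorem exists_basis_chord_repr_mem_Icc (b : Basis ι ℝ E) {X Z : Set E} {lam m : ι → ℝ}
    (hchord : ∀ i, lam i • b i ∈ (X - X) ∪ (Z - Z))
    (hbound : ∀ x ∈ X ∪ Z, ∀ i, |b.repr x i - m i| ≤ lam i / 2) :
    ∃ (b' : Basis ι ℝ E) (p : ι → E) (c : ι → ℝ), ∀ i, p i ∈ X ∪ Z ∧
      (p i ∈ X → p i + lam i • b' i ∈ X) ∧ (p i ∈ Z → p i + lam i • b' i ∈ Z) ∧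
      ∀ x ∈ X ∪ Z, b'.repr x i ∈ Icc (c i) (c i + lam i) := by
  choose σ hσ p hp using fun i => exists_sign_chord_of_mem_union_sub (R := ℝ) (hchord i)
  refine ⟨b.unitsSMul σ, p, fun i => σ i * m i - lam i / 2,
    fun i => ⟨(hp i).1, ?_, ?_, fun x hx => ?_⟩⟩
  · simpa [unitsSMul_apply, smul_comm (σ i)] using (hp i).2.1
  · simpa [unitsSMul_apply, smul_comm (σ i)] using (hp i).2.2
  · have := abs_le.1 (hbound x hx i)
    rcases hσ i with h | h <;>
      simp only [repr_unitsSMul, h, inv_one, inv_neg, Units.smul_def, Units.val_one,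
        Units.val_neg, smul_eq_mul, one_mul, neg_mul, mem_Icc] <;>
      constructor <;> linarith

end Module.Basis

theorem hyperplane_add_segment_eq {ι : Type*} [DecidableEq ι] (i : ι) (c l : ℝ) :
    {x : ι → ℝ | x i = c} + (fun s : ℝ => s • (Pi.single i 1 : ι → ℝ)) '' Icc 0 l =
      {x | x i ∈ Icc c (c + l)} := by
  ext x
  simp only [mem_add, mem_image, mem_ofPred_eq]
  constructor
  · rintro ⟨h, hh, -, ⟨s, hs, rfl⟩, rfl⟩
    simp only [Pi.add_apply, Pi.smul_apply, Pi.single_eq_same, smul_eq_mul, mul_one, hh]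
    exact ⟨by linarith [hs.1], by linarith [hs.2]⟩
  · intro hx
    refine ⟨x - (x i - c) • (Pi.single i 1 : ι → ℝ), ?_,
      (x i - c) • (Pi.single i 1 : ι → ℝ),
      ⟨x i - c, ⟨by linarith [hx.1], by linarith [hx.2]⟩, rfl⟩, by abel⟩
    simp [Pi.single_eq_same]

theorem volume_iInter_hyperplane_add_segment {ι : Type*} [Fintype ι] [DecidableEq ι]
    (c lam : ι → ℝ) (hlam : ∀ i, 0 ≤ lam i) :
    volume (⋂ i, {x : ι → ℝ | x i = c i} +
      (fun s : ℝ => s • (Pi.single i 1 : ι → ℝ)) '' Icc 0 (lam i)) =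
        ENNReal.ofReal (∏ i, lam i) := by
  have hbox : (⋂ i, {x : ι → ℝ | x i ∈ Icc (c i) (c i + lam i)}) =
      univ.pi fun i => Icc (c i) (c i + lam i) := by
    ext; simp only [mem_iInter, mem_ofPred_eq, mem_pi, mem_univ, true_implies]
  simp_rw [hyperplane_add_segment_eq, hbox, volume_pi_pi, Real.volume_Icc, add_sub_cancel_left,
    ENNReal.ofReal_prod_of_nonneg fun i _ => hlam i]

theorem positioning_lemma_general (d : ℕ) (X Y : Set (Fin d → ℝ))
    (hXne : X.Nonempty) (hYne : Y.Nonempty)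
    (hXc : IsCompact X) (hYc : IsCompact Y) :
    ∃ (v : Fin d → ℝ) (T : (Fin d → ℝ) ≃ᵃ[ℝ] (Fin d → ℝ))
      (p : Fin d → (Fin d → ℝ)) (lam : Fin d → ℝ) (H : Fin d → Set (Fin d → ℝ)),
      (∀ i, 0 ≤ lam i) ∧
      (∀ i, ∃ (f : (Fin d → ℝ) →ₗ[ℝ] ℝ) (c : ℝ), f ≠ 0 ∧ H i = {x | f x = c}) ∧
      (∀ i, p i ∈ (T '' X) ∪ (v +ᵥ (T '' Y))) ∧
      (∀ i, (p i ∈ T '' X → p i + lam i • (Pi.single i 1 : Fin d → ℝ) ∈ T '' X) ∧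
            (p i ∈ v +ᵥ (T '' Y) →
              p i + lam i • (Pi.single i 1 : Fin d → ℝ) ∈ v +ᵥ (T '' Y))) ∧
      (∀ i, (T '' X) ∪ (v +ᵥ (T '' Y)) ⊆
        H i + (fun s : ℝ => s • (Pi.single i 1 : Fin d → ℝ)) '' Set.Icc 0 (lam i)) ∧
      volume (⋂ i,
          (H i + (fun s : ℝ => s • (Pi.single i 1 : Fin d → ℝ)) '' Set.Icc 0 (lam i))) =
        ENNReal.ofReal (∏ i, lam i) := by
  obtain ⟨b, lam, hlam, hchord, hK⟩ := (Pi.basisFun ℝ (Fin d)).exists_basis_smul_mem_abs_repr_le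
    ((hXc.sub hXc).union (hYc.sub hYc)) (Or.inl hXne.zero_mem_sub)
  obtain ⟨mX, hmX⟩ := b.exists_abs_repr_sub_le_half hXne fun z hz => hK z (Or.inl hz)
  obtain ⟨mY, hmY⟩ := b.exists_abs_repr_sub_le_half hYne fun z hz => hK z (Or.inr hz)
  set τ := b.equivFun.symm (mX - mY)
  have hτ (i : Fin d) : b.repr τ i = mX i - mY i := congr_fun (b.equivFun.apply_symm_apply _) i
  have hτY : (τ +ᵥ Y) - (τ +ᵥ Y) = Y - Y := by ext; simp [mem_sub, mem_vadd_set]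
  obtain ⟨b', p, c, hp⟩ := b.exists_basis_chord_repr_mem_Icc (X := X) (Z := τ +ᵥ Y) (m := mX)
    (hτY ▸ hchord) <| by
      rintro x (hx | ⟨y, hy, rfl⟩) i
      · exact hmX x hx i
      · convert hmY y hy i using 2
        simp only [vadd_eq_add, map_add, Finsupp.add_apply, hτ]
        ring
  set T := b'.equivFun
  have hTV : T τ +ᵥ T '' Y = T '' (τ +ᵥ Y) := (image_vadd_distrib T τ Y).symm
  have hTchord (i : Fin d) :
      T (p i) + lam i • (Pi.single i 1 : Fin d → ℝ) = T (p i + lam i • b' i) := by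
    rw [map_add, map_smul]; simp [T, Finsupp.single_eq_pi_single]
  refine ⟨T τ, T.toAffineEquiv, fun i => T (p i), lam, fun i => {x | x i = c i}, hlam,
    fun i => ⟨LinearMap.proj i, c i, fun h => by simpa using congr($h (Pi.single i 1)), rfl⟩,
    fun i => ?_, fun i => ?_, fun i => ?_, volume_iInter_hyperplane_add_segment c lam hlam⟩ <;>
    simp only [LinearEquiv.coe_toAffineEquiv, hTV, ← image_union, hTchord,
      T.injective.mem_set_image]
  · exact (hp i).1
  · exact ⟨(hp i).2.1, (hp i).2.2.1⟩
  · rw [hyperplane_add_segment_eq]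
    rintro _ ⟨x, hx, rfl⟩
    exact (hp i).2.2.2 x hx

/-- **The positioning lemma.** Given nonempty compact convex `X, Y ⊆ ℝ^d`,
there are a translation `v` and an invertible affine map `T` such that, with
`U := T(X)` and `V := v + T(Y)`, there are points `pⁱ ∈ U ∪ V`, scalars
`λᵢ ≥ 0` and affine hyperplanes `Hᵢ` with: (1) if `pⁱ ∈ U` then
`pⁱ + λᵢeᵢ ∈ U`, and if `pⁱ ∈ V` then `pⁱ + λᵢeᵢ ∈ V`; (2)
`U ∪ V ⊆ Hᵢ + [0, λᵢ]eᵢ`; (3) `|⋂ᵢ (Hᵢ + [0, λᵢ]eᵢ)| = ∏ᵢ λᵢ`. -/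
theorem positioning_lemma (d : ℕ) (X Y : Set (Fin d → ℝ))
    (hXne : X.Nonempty) (hYne : Y.Nonempty)
    (hXc : IsCompact X) (hYc : IsCompact Y)
    (hXconv : Convex ℝ X) (hYconv : Convex ℝ Y) :
    ∃ (v : Fin d → ℝ) (T : (Fin d → ℝ) ≃ᵃ[ℝ] (Fin d → ℝ))
      (p : Fin d → (Fin d → ℝ)) (lam : Fin d → ℝ) (H : Fin d → Set (Fin d → ℝ)),
      (∀ i, 0 ≤ lam i) ∧
      (∀ i, ∃ (f : (Fin d → ℝ) →ₗ[ℝ] ℝ) (c : ℝ), f ≠ 0 ∧ H i = {x | f x = c}) ∧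
      (∀ i, p i ∈ (T '' X) ∪ (v +ᵥ (T '' Y))) ∧
      (∀ i, (p i ∈ T '' X → p i + lam i • (Pi.single i 1 : Fin d → ℝ) ∈ T '' X) ∧
            (p i ∈ v +ᵥ (T '' Y) →
              p i + lam i • (Pi.single i 1 : Fin d → ℝ) ∈ v +ᵥ (T '' Y))) ∧
      (∀ i, (T '' X) ∪ (v +ᵥ (T '' Y)) ⊆
        H i + (fun s : ℝ => s • (Pi.single i 1 : Fin d → ℝ)) '' Set.Icc 0 (lam i)) ∧
      volume (⋂ i,
          (H i + (fun s : ℝ => s • (Pi.single i 1 : Fin d → ℝ)) '' Set.Icc 0 (lam i))) =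
        ENNReal.ofReal (∏ i, lam i) :=
  positioning_lemma_general d X Y hXne hYne hXc hYc
end

section
/- Let d ≥ 1, t ∈ (0, 1/2], let A = [0, 1]^d be the unit cube, and let v ∈ ℝ^d be a vector whose first coordinate satisfies v_1 ≥ 1/(1−t) and whose remaining coordinates are nonnegative. Set B := A ∪ {v}. Then tA + (1−t)B = [0,1]^d ∪ ((1−t)v + [0, t]^d), and consequently |tA + (1−t)B| = (1 + t^d)·|A|, i.e. δ_t(A, B) = t^d. -/
/-!
Since the cube `A` is convex, `tA + (1-t)A = A`, and `tA + (1-t)v` is the cube of side `t`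
at `(1-t)v`. As `(1-t)v₁ ≥ 1`, the two cubes meet only inside the hyperplane `x₁ = 1`, so their
volumes `1` and `tᵈ` add.
-/

open MeasureTheory Pointwise

namespace Set

theorem smul_Icc_of_pos {α β : Type*} [GroupWithZero α] [Preorder α] [Preorder β]
    [MulAction α β] [PosSMulMono α β] [PosSMulReflectLE α β] {a : α} (ha : 0 < a) (b c : β) :
    a • Icc b c = Icc (a • b) (a • c) :=
  (OrderIso.smulRight ha).image_Icc b c

theorem vadd_Icc_of_isOrderedAddMonoid {α : Type*} [AddCommGroup α] [PartialOrder α]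
    [IsOrderedAddMonoid α] (a b c : α) : a +ᵥ Icc b c = Icc (a + b) (a + c) :=
  image_const_add_Icc a b c

end Set

open Set

variable {ι : Type*}

theorem aedisjoint_Icc_Icc_of_le [Fintype ι] {a b c e : ι → ℝ} {i : ι} (h : b i ≤ c i) :
    AEDisjoint volume (Icc a b) (Icc c e) := by
  have hface : volume ((Function.eval i : (ι → ℝ) → ℝ) ⁻¹' {b i}) = 0 := by
    rw [volume_pi]
    exact Measure.pi_eval_preimage_null _ Real.volume_singleton
  refine measure_mono_null (fun x hx => ?_) hface
  exact le_antisymm (hx.1.2 i) (h.trans (hx.2.1 i))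

theorem volume_Icc_zero_const [Fintype ι] {r : ℝ} (hr : 0 ≤ r) :
    volume (Icc (0 : ι → ℝ) fun _ => r) = ENNReal.ofReal (r ^ Fintype.card ι) := by
  simp [Real.volume_Icc_pi, ENNReal.ofReal_pow hr]

theorem smul_unitCube_add_smul_unitCube_union_singleton {t : ℝ} (ht0 : 0 < t) (ht1 : t ≤ 1)
    (v : ι → ℝ) :
    t • Icc (0 : ι → ℝ) 1 + (1 - t) • (Icc 0 1 ∪ {v}) =
      Icc (0 : ι → ℝ) 1 ∪ ((1 - t) • v +ᵥ Icc 0 fun _ => t) := by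
  have hscale : t • Icc (0 : ι → ℝ) 1 = Icc 0 fun _ => t := by
    rw [smul_Icc_of_pos ht0, smul_zero]
    congr 1
    ext i
    simp
  rw [smul_set_union, add_union, ← (convex_Icc 0 1).add_smul ht0.le (sub_nonneg.2 ht1),
    add_sub_cancel, one_smul, smul_set_singleton, add_comm, singleton_add, hscale]
  rfl

theorem sharpness_example_general (d : ℕ) (hd : 1 ≤ d) (t : ℝ) (ht0 : 0 < t)
    (ht2 : t ≤ 1 / 2) (v : Fin d → ℝ)
    (hv1 : 1 / (1 - t) ≤ v ⟨0, hd⟩) :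
    t • Set.Icc (0 : Fin d → ℝ) 1 +
        (1 - t) • (Set.Icc (0 : Fin d → ℝ) 1 ∪ {v}) =
      Set.Icc (0 : Fin d → ℝ) 1 ∪
        ((1 - t) • v +ᵥ Set.Icc (0 : Fin d → ℝ) (fun _ => t)) ∧
    volume (t • Set.Icc (0 : Fin d → ℝ) 1 +
        (1 - t) • (Set.Icc (0 : Fin d → ℝ) 1 ∪ {v})) =
      ENNReal.ofReal (1 + t ^ d) * volume (Set.Icc (0 : Fin d → ℝ) 1) := by
  have h1t : 0 < 1 - t := by linarith
  have hsum := smul_unitCube_add_smul_unitCube_union_singleton ht0 (by linarith) v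
  refine ⟨hsum, ?_⟩
  have hbeyond : (1 : ℝ) ≤ ((1 - t) • v) ⟨0, hd⟩ := by
    rw [Pi.smul_apply, smul_eq_mul, ← div_le_iff₀' h1t]
    exact hv1
  have hdisj : AEDisjoint volume (Icc (0 : Fin d → ℝ) 1) ((1 - t) • v +ᵥ Icc 0 fun _ => t) := by
    rw [vadd_Icc_of_isOrderedAddMonoid, add_zero]
    exact aedisjoint_Icc_Icc_of_le hbeyond
  have hcube : volume (Icc (0 : Fin d → ℝ) 1) = 1 := by
    simp [Real.volume_Icc_pi]
  rw [hsum, measure_union₀ (measurableSet_Icc.const_vadd _).nullMeasurableSet hdisj,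
    measure_vadd, volume_Icc_zero_const ht0.le, hcube, Fintype.card_fin,
    ENNReal.ofReal_add zero_le_one (by positivity), ENNReal.ofReal_one, mul_one]

/-- **Sharpness example.** For `d ≥ 1`, `t ∈ (0, 1/2]`, `A = [0,1]^d` the unit
cube, and `v ∈ ℝ^d` with nonnegative coordinates and first coordinate at least
`1/(1-t)`, setting `B := A ∪ {v}` gives
`tA + (1-t)B = [0,1]^d ∪ ((1-t)v + [0,t]^d)`, and consequently
`|tA + (1-t)B| = (1 + t^d)|A|`, i.e. `δ_t(A, B) = t^d`. -/
theorem sharpness_example (d : ℕ) (hd : 1 ≤ d) (t : ℝ) (ht0 : 0 < t)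
    (ht2 : t ≤ 1 / 2) (v : Fin d → ℝ) (hv0 : ∀ i, 0 ≤ v i)
    (hv1 : 1 / (1 - t) ≤ v ⟨0, hd⟩) :
    t • Set.Icc (0 : Fin d → ℝ) 1 +
        (1 - t) • (Set.Icc (0 : Fin d → ℝ) 1 ∪ {v}) =
      Set.Icc (0 : Fin d → ℝ) 1 ∪
        ((1 - t) • v +ᵥ Set.Icc (0 : Fin d → ℝ) (fun _ => t)) ∧
    volume (t • Set.Icc (0 : Fin d → ℝ) 1 +
        (1 - t) • (Set.Icc (0 : Fin d → ℝ) 1 ∪ {v})) =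
      ENNReal.ofReal (1 + t ^ d) * volume (Set.Icc (0 : Fin d → ℝ) 1) :=
  sharpness_example_general d hd t ht0 ht2 v hv1
end

section
/- Let d ≥ 1 and let A ⊆ ℝ^d be a nonempty set. Suppose that for each coordinate direction i ∈ {1, …, d} there exist a point a^i ∈ ℝ^d and a set F_i ⊆ A with F_i ⊆ a^i + ℝ·e_i (i.e. F_i lies on a line in direction e_i) whose one-dimensional Lebesgue outer measure along that line is at least m_i ≥ 0. Then the d-fold iterated sumset satisfies |d·A| ≥ ∏_{i=1}^d m_i, where |·| denotes Lebesgue outer measure on ℝ^d. -/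
/-! The box `G₁ × ⋯ × G_d`, translated by `∑ᵢ aⁱ`, is the set of sums `∑ᵢ (aⁱ + xᵢ eᵢ)` with
`xᵢ ∈ Gᵢ`, one point from each fiber `aⁱ + Gᵢ eᵢ ⊆ A`; so it lies in `d·A`, and its volume is
`∏ᵢ |Gᵢ| ≥ ∏ᵢ mᵢ`. -/

open MeasureTheory Pointwise

/-- The `k`-fold iterated Minkowski sumset `k·A = A + ⋯ + A` (`k` summands),
defined for `k ≥ 1` (and as `∅` for `k = 0`). -/
def kSum {α : Type*} [Add α] : ℕ → Set α → Set α
  | 0, _ => ∅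
  | 1, A => A
  | n + 2, A => kSum (n + 1) A + A

section kSum

variable {α : Type*} {A : Set α}

theorem kSum_succ [Add α] {n : ℕ} (hn : 1 ≤ n) : kSum (n + 1) A = kSum n A + A := by
  obtain ⟨k, rfl⟩ := Nat.exists_eq_add_of_le' hn
  rfl

theorem sum_mem_kSum [AddCommMonoid α] {n : ℕ} (hn : 1 ≤ n) (f : Fin n → α)
    (hf : ∀ i, f i ∈ A) : ∑ i, f i ∈ kSum n A := by
  induction n, hn using Nat.le_induction with
  | base => simpa [kSum] using hf 0
  | succ n hn ih =>
    rw [Fin.sum_univ_castSucc, kSum_succ hn]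
    exact Set.add_mem_add (ih _ fun i => hf _) (hf _)

end kSum

theorem sum_add_smul_single {ι R : Type*} [Fintype ι] [DecidableEq ι] [Semiring R]
    (a : ι → ι → R) (x : ι → R) :
    ∑ i, (a i + x i • Pi.single i 1) = ∑ i, a i + x := by
  simp only [Finset.sum_add_distrib, ← Pi.single_smul', smul_eq_mul, mul_one,
    Finset.univ_sum_single]

theorem vadd_pi_subset_kSum {R : Type*} [Semiring R] {d : ℕ} (hd : 1 ≤ d)
    {A : Set (Fin d → R)} {a : Fin d → Fin d → R} {G : Fin d → Set R}
    (hGA : ∀ i, (fun s : R => a i + s • (Pi.single i 1 : Fin d → R)) '' G i ⊆ A) :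
    (∑ i, a i) +ᵥ Set.univ.pi G ⊆ kSum d A := by
  rintro _ ⟨x, hx, rfl⟩
  show ∑ i, a i + x ∈ kSum d A
  rw [← sum_add_smul_single]
  exact sum_mem_kSum hd _ fun i => hGA i ⟨x i, hx i (Set.mem_univ i), rfl⟩

theorem fiber_product_lower_bound_general (d : ℕ) (hd : 1 ≤ d)
    (A : Set (Fin d → ℝ)) (a : Fin d → (Fin d → ℝ))
    (m : Fin d → ℝ) (hm : ∀ i, 0 ≤ m i)
    (hfib : ∀ i, ∃ G : Set ℝ, ENNReal.ofReal (m i) ≤ volume G ∧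
      (fun s : ℝ => a i + s • (Pi.single i 1 : Fin d → ℝ)) '' G ⊆ A) :
    ENNReal.ofReal (∏ i, m i) ≤ volume (kSum d A) := by
  choose G hG hGA using hfib
  calc ENNReal.ofReal (∏ i, m i) = ∏ i, ENNReal.ofReal (m i) :=
        ENNReal.ofReal_prod_of_nonneg fun i _ => hm i
    _ ≤ ∏ i, volume (G i) := Finset.prod_le_prod' fun i _ => hG i
    _ = volume (Set.univ.pi G) := (volume_pi_pi G).symm
    _ = volume ((∑ i, a i) +ᵥ Set.univ.pi G) := (measure_vadd volume _ _).symm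
    _ ≤ volume (kSum d A) := measure_mono (vadd_pi_subset_kSum hd hGA)

/-- **Fiber-product lower bound for iterated sumsets.** Let `A ⊆ ℝ^d` be
nonempty, `d ≥ 1`, and suppose for each coordinate direction `i` the set `A`
contains a subset of the line `aⁱ + ℝeᵢ` whose one-dimensional outer measure
(i.e. the outer measure of its parameter set) is at least `mᵢ ≥ 0`. Then
`|d·A| ≥ ∏ᵢ mᵢ`. -/
theorem fiber_product_lower_bound (d : ℕ) (hd : 1 ≤ d)
    (A : Set (Fin d → ℝ)) (hAne : A.Nonempty) (a : Fin d → (Fin d → ℝ))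
    (m : Fin d → ℝ) (hm : ∀ i, 0 ≤ m i)
    (hfib : ∀ i, ∃ G : Set ℝ, ENNReal.ofReal (m i) ≤ volume G ∧
      (fun s : ℝ => a i + s • (Pi.single i 1 : Fin d → ℝ)) '' G ⊆ A) :
    ENNReal.ofReal (∏ i, m i) ≤ volume (kSum d A) :=
  fiber_product_lower_bound_general d hd A a m hm hfib
end
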